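/- arXiv:1310.6618 — 7 statements merged into one kernel-verified Lean document; each statement's English description precedes it below -/
import Mathlib

section
/- Let H be a real inner product space, c : H → H a linear map, X_h a finite-dimensional subspace of H, Y_h ⊆ X_h a subspace, and C > 0 a constant with ‖v‖ ≤ C‖c v‖ for all v ∈ Y_h. Define 𝒱_h = {(v, ψ) ∈ Y_h × X_h : ⟨c v, c μ⟩ = ⟨ψ, μ⟩ for all μ ∈ X_h}. Then: (a) every (v, ψ) ∈ 𝒱_h satisfies (‖c v‖² + ‖ψ‖²)^{1/2} ≤ (C² + 1)^{1/2}‖ψ‖, so (v, ψ) ↦ ‖ψ‖ is a norm on 𝒱_h; and (b) for every f ∈ H there exists a unique (u_h, φ_h) ∈ 𝒱_h such that ⟨φ_h, ψ⟩ = ⟨f, v⟩ for all (v, ψ) ∈ 𝒱_h, and it is the unique minimizer over 𝒱_h of 𝒥(v, ψ) = ½‖ψ‖² − ⟨f, v⟩. -/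
/-!
On `𝒱_h` the constraint tested with `μ = v` gives `‖c v‖² = ⟪ψ, v⟫ ≤ ‖ψ‖ ‖v‖ ≤ |C| ‖ψ‖ ‖c v‖`,
so `‖c v‖ ≤ |C| ‖ψ‖`; this gives the norm bound and shows that `(v, ψ) ↦ ψ` is injective on `𝒱_h`.
Hence `𝒱_h` embeds into the finite-dimensional `X_h`, the Gram form `⟪ψ, ψ'⟫` is nondegenerate
on it, and the load `(v, ψ) ↦ ⟪f, v⟫` is represented by a unique element of `𝒱_h`.
Completing the square, `𝒥(v, ψ) = 𝒥(u_h, φ_h) + ½ ‖ψ - φ_h‖²` for the solution `(u_h, φ_h)`,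
which identifies solutions with minimizers.
-/

open scoped RealInnerProductSpace

/-- Membership in the discrete constrained space `𝒱_h` for the mixed quad-curl method:
`(v, ψ) ∈ Y_h × X_h` with `⟪c v, c μ⟫ = ⟪ψ, μ⟫` for all `μ ∈ X_h`. -/
def inVh {H : Type*} [NormedAddCommGroup H] [InnerProductSpace ℝ H]
    (c : H →ₗ[ℝ] H) (Xh Yh : Submodule ℝ H) (v ψ : H) : Prop :=
  v ∈ Yh ∧ ψ ∈ Xh ∧ ∀ μ ∈ Xh, ⟪c v, c μ⟫ = ⟪ψ, μ⟫

theorem LinearMap.exists_inner_apply_eq_of_injective {V E : Type*} [AddCommGroup V]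
    [Module ℝ V] [NormedAddCommGroup E] [InnerProductSpace ℝ E] [FiniteDimensional ℝ E]
    {S : V →ₗ[ℝ] E} (hS : Function.Injective S) (ℓ : Module.Dual ℝ V) :
    ∃ p, ∀ q, ⟪S p, S q⟫ = ℓ q := by
  have : FiniteDimensional ℝ V := .of_injective S hS
  let B : LinearMap.BilinForm ℝ V := (innerₛₗ ℝ).compl₁₂ S S
  have hB_apply (p q : V) : B p q = ⟪S p, S q⟫ := rfl
  have hB : B.SeparatingLeft := fun p hp => by
    rw [← S.map_eq_zero_iff hS, ← inner_self_eq_zero (𝕜 := ℝ), ← hB_apply, hp]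
  have hB_nondeg : B.Nondegenerate :=
    ⟨hB, fun q hq => hB q fun p => by rw [hB_apply, real_inner_comm, ← hB_apply, hq]⟩
  exact ⟨(B.toDual hB_nondeg).symm ℓ, fun q =>
    (hB_apply _ q).symm.trans (LinearMap.BilinForm.apply_toDual_symm_apply ℓ q)⟩

theorem half_norm_sq_sub_inner_eq_add {H : Type*} [NormedAddCommGroup H]
    [InnerProductSpace ℝ H] {f u φ v ψ : H} (hφ : ⟪φ, φ⟫ = ⟪f, u⟫) (hψ : ⟪φ, ψ⟫ = ⟪f, v⟫) :
    1 / 2 * ‖ψ‖ ^ 2 - ⟪f, v⟫ = 1 / 2 * ‖φ‖ ^ 2 - ⟪f, u⟫ + 1 / 2 * ‖ψ - φ‖ ^ 2 := by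
  rw [← hφ, ← hψ, norm_sub_sq_real, real_inner_self_eq_norm_sq, real_inner_comm]
  ring

namespace QuadCurl

variable {H : Type*} [NormedAddCommGroup H] [InnerProductSpace ℝ H]
  {c : H →ₗ[ℝ] H} {Xh Yh : Submodule ℝ H}

variable (c Xh Yh) in
def Vh : Submodule ℝ (H × H) where
  carrier := {p | inVh c Xh Yh p.1 p.2}
  add_mem' := by
    rintro ⟨v, ψ⟩ ⟨v', ψ'⟩ ⟨hv, hψ, h⟩ ⟨hv', hψ', h'⟩
    refine ⟨Yh.add_mem hv hv', Xh.add_mem hψ hψ', fun μ hμ => ?_⟩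
    simp only [Prod.fst_add, Prod.snd_add, map_add, inner_add_left, h μ hμ, h' μ hμ]
  zero_mem' := ⟨Yh.zero_mem, Xh.zero_mem, fun μ _ => by simp⟩
  smul_mem' := by
    rintro t ⟨v, ψ⟩ ⟨hv, hψ, h⟩
    refine ⟨Yh.smul_mem t hv, Xh.smul_mem t hψ, fun μ hμ => ?_⟩
    simp only [Prod.smul_fst, Prod.smul_snd, map_smul, real_inner_smul_left, h μ hμ]

theorem mem_Vh {p : H × H} : p ∈ Vh c Xh Yh ↔ inVh c Xh Yh p.1 p.2 := Iff.rfl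

variable (c Xh Yh) in
def IsMixedSolution (f u φ : H) : Prop :=
  inVh c Xh Yh u φ ∧ ∀ v ψ : H, inVh c Xh Yh v ψ → ⟪φ, ψ⟫ = ⟪f, v⟫

variable (c Xh Yh) in
def IsEnergyMinimizer (f u φ : H) : Prop :=
  inVh c Xh Yh u φ ∧ ∀ v ψ : H, inVh c Xh Yh v ψ →
    1 / 2 * ‖φ‖ ^ 2 - ⟪f, u⟫ ≤ 1 / 2 * ‖ψ‖ ^ 2 - ⟪f, v⟫

variable (hYX : Yh ≤ Xh) {C : ℝ} (hFried : ∀ v ∈ Yh, ‖v‖ ≤ C * ‖c v‖)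
include hYX

theorem norm_apply_sq_eq_inner {v ψ : H} (h : inVh c Xh Yh v ψ) : ‖c v‖ ^ 2 = ⟪ψ, v⟫ := by
  rw [← h.2.2 v (hYX h.1), real_inner_self_eq_norm_sq]

include hFried

theorem norm_apply_le {v ψ : H} (h : inVh c Xh Yh v ψ) : ‖c v‖ ≤ |C| * ‖ψ‖ := by
  rcases (norm_nonneg (c v)).eq_or_lt with h0 | hpos
  · rw [← h0]; positivity
  refine le_of_mul_le_mul_right ?_ hpos
  calc ‖c v‖ * ‖c v‖ = ⟪ψ, v⟫ := by rw [← sq, norm_apply_sq_eq_inner hYX h]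
    _ ≤ ‖ψ‖ * ‖v‖ := real_inner_le_norm ψ v
    _ ≤ ‖ψ‖ * (|C| * ‖c v‖) := by
        gcongr; exact (hFried v h.1).trans (by gcongr; exact le_abs_self C)
    _ = |C| * ‖ψ‖ * ‖c v‖ := by ring

theorem sqrt_norm_sq_add_norm_sq_le {v ψ : H} (h : inVh c Xh Yh v ψ) :
    √(‖c v‖ ^ 2 + ‖ψ‖ ^ 2) ≤ √(C ^ 2 + 1) * ‖ψ‖ := by
  have hcurl : ‖c v‖ ^ 2 ≤ C ^ 2 * ‖ψ‖ ^ 2 := by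
    simpa [mul_pow] using pow_le_pow_left₀ (norm_nonneg _) (norm_apply_le hYX hFried h) 2
  rw [← Real.sqrt_sq (norm_nonneg ψ), ← Real.sqrt_mul (by positivity), Real.sqrt_sq (norm_nonneg ψ)]
  exact Real.sqrt_le_sqrt (by linarith)

theorem eq_zero_of_inVh_zero {v : H} (h : inVh c Xh Yh v 0) : v = 0 := by
  have hcv : c v = 0 := norm_le_zero_iff.mp (by simpa using norm_apply_le hYX hFried h)
  simpa [hcv] using hFried v h.1

theorem injOn_snd_Vh : Set.InjOn Prod.snd (Vh c Xh Yh : Set (H × H)) := by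
  intro p hp q hq hpq
  have hdiff : inVh c Xh Yh (p.1 - q.1) 0 := by
    simpa [hpq] using mem_Vh.mp ((Vh c Xh Yh).sub_mem hp hq)
  exact Prod.ext (sub_eq_zero.mp (eq_zero_of_inVh_zero hYX hFried hdiff)) hpq

theorem exists_isMixedSolution [FiniteDimensional ℝ Xh] (f : H) :
    ∃ u φ, IsMixedSolution c Xh Yh f u φ := by
  let S : Vh c Xh Yh →ₗ[ℝ] Xh :=
    LinearMap.codRestrict Xh ((LinearMap.snd ℝ H H).comp (Vh c Xh Yh).subtype)
      fun p => p.2.2.1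
  have hS : Function.Injective S := fun p q hpq =>
    Subtype.ext (injOn_snd_Vh hYX hFried p.2 q.2 (congrArg Subtype.val hpq))
  let load : Module.Dual ℝ (Vh c Xh Yh) :=
    (innerₛₗ ℝ f).comp ((LinearMap.fst ℝ H H).comp (Vh c Xh Yh).subtype)
  obtain ⟨p, hp⟩ := S.exists_inner_apply_eq_of_injective hS load
  exact ⟨p.1.1, p.1.2, p.2, fun v ψ h => hp ⟨(v, ψ), h⟩⟩

omit hYX hFried in
theorem IsMixedSolution.isEnergyMinimizer {f u φ : H} (h : IsMixedSolution c Xh Yh f u φ) :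
    IsEnergyMinimizer c Xh Yh f u φ := by
  refine ⟨h.1, fun v ψ hvψ => ?_⟩
  rw [half_norm_sq_sub_inner_eq_add (h.2 u φ h.1) (h.2 v ψ hvψ)]
  nlinarith [sq_nonneg ‖ψ - φ‖]

theorem IsEnergyMinimizer.eq_of_isMixedSolution {f u φ u' φ' : H}
    (h' : IsEnergyMinimizer c Xh Yh f u' φ') (h : IsMixedSolution c Xh Yh f u φ) :
    u' = u ∧ φ' = φ := by
  have hle := h'.2 u φ h.1
  rw [half_norm_sq_sub_inner_eq_add (h.2 u φ h.1) (h.2 u' φ' h'.1)] at hle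
  have hφ : φ' = φ := by
    have : ‖φ' - φ‖ ^ 2 ≤ 0 := by linarith
    exact sub_eq_zero.mp (norm_eq_zero.mp (pow_eq_zero_iff two_ne_zero |>.mp
      (le_antisymm this (sq_nonneg _))))
  exact Prod.ext_iff.mp <| injOn_snd_Vh hYX hFried (x₁ := (u', φ')) (x₂ := (u, φ)) h'.1 h.1 hφ

end QuadCurl

open QuadCurl in
theorem stmt5_general {H : Type*} [NormedAddCommGroup H] [InnerProductSpace ℝ H]
    (c : H →ₗ[ℝ] H) (Xh Yh : Submodule ℝ H) [FiniteDimensional ℝ Xh]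
    (hYX : Yh ≤ Xh) (C : ℝ)
    (hFried : ∀ v ∈ Yh, ‖v‖ ≤ C * ‖c v‖) :
    (∀ v ψ : H, inVh c Xh Yh v ψ →
      Real.sqrt (‖c v‖ ^ 2 + ‖ψ‖ ^ 2) ≤ Real.sqrt (C ^ 2 + 1) * ‖ψ‖) ∧
    (∀ f : H,
      (∃! p : H × H, inVh c Xh Yh p.1 p.2 ∧
        ∀ v ψ : H, inVh c Xh Yh v ψ → ⟪p.2, ψ⟫ = ⟪f, v⟫) ∧
      (∀ uh φh : H,
        (inVh c Xh Yh uh φh ∧ ∀ v ψ : H, inVh c Xh Yh v ψ → ⟪φh, ψ⟫ = ⟪f, v⟫) ↔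
        (inVh c Xh Yh uh φh ∧ ∀ v ψ : H, inVh c Xh Yh v ψ →
          (1 / 2) * ‖φh‖ ^ 2 - ⟪f, uh⟫ ≤ (1 / 2) * ‖ψ‖ ^ 2 - ⟪f, v⟫))) := by
  refine ⟨fun v ψ h => sqrt_norm_sq_add_norm_sq_le hYX hFried h, fun f => ?_⟩
  obtain ⟨u, φ, hsol⟩ := exists_isMixedSolution hYX hFried f
  have hunique (u' φ' : H) (h' : IsEnergyMinimizer c Xh Yh f u' φ') : u' = u ∧ φ' = φ :=
    h'.eq_of_isMixedSolution hYX hFried hsol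
  refine ⟨⟨(u, φ), hsol, fun q hq => ?_⟩, fun u' φ' => ⟨IsMixedSolution.isEnergyMinimizer, ?_⟩⟩
  · exact Prod.ext_iff.mpr (hunique q.1 q.2 (IsMixedSolution.isEnergyMinimizer hq))
  · intro h'
    obtain ⟨rfl, rfl⟩ := hunique u' φ' h'
    exact hsol

/-- Unique solvability of the discrete mixed finite element problem for the quad-curl
problem: (a) the norm bound making `(v, ψ) ↦ ‖ψ‖` a norm on `𝒱_h`; (b) for every `f`
there is a unique `(u_h, φ_h) ∈ 𝒱_h` solving the discrete variational problem, and it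
is characterized as the unique minimizer of `𝒥` over `𝒱_h`. -/
theorem stmt5 {H : Type*} [NormedAddCommGroup H] [InnerProductSpace ℝ H]
    (c : H →ₗ[ℝ] H) (Xh Yh : Submodule ℝ H) [FiniteDimensional ℝ Xh]
    (hYX : Yh ≤ Xh) (C : ℝ) (hC : 0 < C)
    (hFried : ∀ v ∈ Yh, ‖v‖ ≤ C * ‖c v‖) :
    (∀ v ψ : H, inVh c Xh Yh v ψ →
      Real.sqrt (‖c v‖ ^ 2 + ‖ψ‖ ^ 2) ≤ Real.sqrt (C ^ 2 + 1) * ‖ψ‖) ∧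
    (∀ f : H,
      (∃! p : H × H, inVh c Xh Yh p.1 p.2 ∧
        ∀ v ψ : H, inVh c Xh Yh v ψ → ⟪p.2, ψ⟫ = ⟪f, v⟫) ∧
      (∀ uh φh : H,
        (inVh c Xh Yh uh φh ∧ ∀ v ψ : H, inVh c Xh Yh v ψ → ⟪φh, ψ⟫ = ⟪f, v⟫) ↔
        (inVh c Xh Yh uh φh ∧ ∀ v ψ : H, inVh c Xh Yh v ψ →
          (1 / 2) * ‖φh‖ ^ 2 - ⟪f, uh⟫ ≤ (1 / 2) * ‖ψ‖ ^ 2 - ⟪f, v⟫))) :=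
  stmt5_general c Xh Yh hYX C hFried
end

section
/- Let H be a real inner product space, c : H → H a linear map, X_h a finite-dimensional subspace of H, Y_h ⊆ X_h a subspace, and C > 0 a constant with ‖v‖ ≤ C‖c v‖ for all v ∈ Y_h. Define 𝒱_h = {(v, ψ) ∈ Y_h × X_h : ⟨c v, c μ⟩ = ⟨ψ, μ⟩ for all μ ∈ X_h}. If (u_h, φ_h) ∈ 𝒱_h and (v_h, ψ_h) ∈ 𝒱_h, then ‖c(u_h − v_h)‖ ≤ C‖φ_h − ψ_h‖. -/
open scoped RealInnerProductSpace

section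

variable {H : Type*} [NormedAddCommGroup H] [InnerProductSpace ℝ H]

/-- The energy estimate: testing `⟪c w, c ·⟫ = ⟪f, ·⟫` with `w` itself and applying the
Friedrichs bound for `w` gives `‖c w‖² ≤ ‖f‖ ‖w‖ ≤ C ‖f‖ ‖c w‖`. -/
theorem norm_map_le_of_inner_map_self_eq {c : H →ₗ[ℝ] H} {C : ℝ} (hC : 0 ≤ C) {w f : H}
    (hFried : ‖w‖ ≤ C * ‖c w‖) (henergy : ⟪c w, c w⟫ = ⟪f, w⟫) :
    ‖c w‖ ≤ C * ‖f‖ := by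
  have hsq : ‖c w‖ * ‖c w‖ ≤ C * ‖f‖ * ‖c w‖ :=
    calc ‖c w‖ * ‖c w‖ = ⟪f, w⟫ := by rw [← henergy, real_inner_self_eq_norm_mul_norm]
      _ ≤ ‖f‖ * ‖w‖ := real_inner_le_norm f w
      _ ≤ ‖f‖ * (C * ‖c w‖) := mul_le_mul_of_nonneg_left hFried (norm_nonneg f)
      _ = C * ‖f‖ * ‖c w‖ := by ring
  rcases (norm_nonneg (c w)).eq_or_lt with hzero | hpos
  · rw [← hzero]
    positivity
  · exact le_of_mul_le_mul_right hsq hpos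

theorem inVh.sub_mem {c : H →ₗ[ℝ] H} {Xh Yh : Submodule ℝ H} {u φ v ψ : H}
    (h₁ : inVh c Xh Yh u φ) (h₂ : inVh c Xh Yh v ψ) : u - v ∈ Yh :=
  Yh.sub_mem h₁.1 h₂.1

theorem inVh.inner_map_sub {c : H →ₗ[ℝ] H} {Xh Yh : Submodule ℝ H} {u φ v ψ : H}
    (h₁ : inVh c Xh Yh u φ) (h₂ : inVh c Xh Yh v ψ) {μ : H} (hμ : μ ∈ Xh) :
    ⟪c (u - v), c μ⟫ = ⟪φ - ψ, μ⟫ := by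
  rw [map_sub, inner_sub_left, inner_sub_left, h₁.2.2 μ hμ, h₂.2.2 μ hμ]

end

theorem stmt6_general {H : Type*} [NormedAddCommGroup H] [InnerProductSpace ℝ H]
    (c : H →ₗ[ℝ] H) (Xh Yh : Submodule ℝ H)
    (hYX : Yh ≤ Xh) (C : ℝ) (hC : 0 < C)
    (hFried : ∀ v ∈ Yh, ‖v‖ ≤ C * ‖c v‖)
    (uh φh vh ψh : H)
    (h1 : inVh c Xh Yh uh φh) (h2 : inVh c Xh Yh vh ψh) :
    ‖c (uh - vh)‖ ≤ C * ‖φh - ψh‖ := by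
  have hY : uh - vh ∈ Yh := h1.sub_mem h2
  exact norm_map_le_of_inner_map_self_eq hC.le (hFried _ hY) (h1.inner_map_sub h2 (hYX hY))

/-- Stability estimate between two elements of the discrete constrained space:
`‖c(u_h − v_h)‖ ≤ C‖φ_h − ψ_h‖`. -/
theorem stmt6 {H : Type*} [NormedAddCommGroup H] [InnerProductSpace ℝ H]
    (c : H →ₗ[ℝ] H) (Xh Yh : Submodule ℝ H) [FiniteDimensional ℝ Xh]
    (hYX : Yh ≤ Xh) (C : ℝ) (hC : 0 < C)
    (hFried : ∀ v ∈ Yh, ‖v‖ ≤ C * ‖c v‖)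
    (uh φh vh ψh : H)
    (h1 : inVh c Xh Yh uh φh) (h2 : inVh c Xh Yh vh ψh) :
    ‖c (uh - vh)‖ ≤ C * ‖φh - ψh‖ :=
  stmt6_general c Xh Yh hYX C hC hFried uh φh vh ψh h1 h2
end

section
/- Let H be a real inner product space, c : H → H a linear map, X_h a finite-dimensional subspace of H, Y_h ⊆ X_h a subspace, and 𝒱_h = {(v, ψ) ∈ Y_h × X_h : ⟨c v, c μ⟩ = ⟨ψ, μ⟩ for all μ ∈ X_h}. Suppose u, φ, f ∈ H satisfy ⟨c φ, c w⟩ = ⟨f, w⟩ for all w ∈ Y_h, and (u_h, φ_h) ∈ 𝒱_h satisfies ⟨φ_h, ψ⟩ = ⟨f, v⟩ for all (v, ψ) ∈ 𝒱_h. Then for every (v_h, ψ_h) ∈ 𝒱_h and every μ_h ∈ X_h, ⟨c(u_h − v_h), c(φ − μ_h)⟩ − ⟨φ_h − ψ_h, φ − μ_h⟩ = −⟨φ − φ_h, φ_h − ψ_h⟩. -/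
open scoped RealInnerProductSpace

theorem inVh.sub {H : Type*} [NormedAddCommGroup H] [InnerProductSpace ℝ H]
    {c : H →ₗ[ℝ] H} {Xh Yh : Submodule ℝ H} {v ψ v' ψ' : H}
    (h : inVh c Xh Yh v ψ) (h' : inVh c Xh Yh v' ψ') :
    inVh c Xh Yh (v - v') (ψ - ψ') := by
  obtain ⟨hv, hψ, hvψ⟩ := h
  obtain ⟨hv', hψ', hvψ'⟩ := h'
  refine ⟨Yh.sub_mem hv hv', Xh.sub_mem hψ hψ', fun μ hμ => ?_⟩
  rw [map_sub, inner_sub_left, inner_sub_left, hvψ μ hμ, hvψ' μ hμ]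

theorem stmt7_general {H : Type*} [NormedAddCommGroup H] [InnerProductSpace ℝ H]
    (c : H →ₗ[ℝ] H) (Xh Yh : Submodule ℝ H)
    (φ f : H)
    (hexact : ∀ w ∈ Yh, ⟪c φ, c w⟫ = ⟪f, w⟫)
    (uh φh : H) (hmem : inVh c Xh Yh uh φh)
    (hdisc : ∀ v ψ : H, inVh c Xh Yh v ψ → ⟪φh, ψ⟫ = ⟪f, v⟫) :
    ∀ vh ψh : H, inVh c Xh Yh vh ψh → ∀ μh ∈ Xh,
      ⟪c (uh - vh), c (φ - μh)⟫ - ⟪φh - ψh, φ - μh⟫ = -⟪φ - φh, φh - ψh⟫ := by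
  intro vh ψh hv μh hμ
  have hdiff := hmem.sub hv
  have galerkin : ⟪c (uh - vh), c μh⟫ = ⟪φh - ψh, μh⟫ := hdiff.2.2 μh hμ
  have consistency : ⟪c (uh - vh), c φ⟫ = ⟪φh, φh - ψh⟫ := by
    rw [real_inner_comm, hexact _ hdiff.1, inner_sub_right, inner_sub_right,
      hdisc _ _ hmem, hdisc _ _ hv]
  rw [map_sub c φ μh, inner_sub_right (c (uh - vh)), galerkin, consistency,
    inner_sub_right (φh - ψh), inner_sub_left φ φh, real_inner_comm φ]
  ring

/-- The fundamental error identity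
`β((u_h − v_h, φ_h − ψ_h), φ − μ_h) = −⟪φ − φ_h, φ_h − ψ_h⟫`
in the quasi-optimality proof of the mixed method for the quad-curl problem. -/
theorem stmt7 {H : Type*} [NormedAddCommGroup H] [InnerProductSpace ℝ H]
    (c : H →ₗ[ℝ] H) (Xh Yh : Submodule ℝ H) [FiniteDimensional ℝ Xh]
    (hYX : Yh ≤ Xh)
    (u φ f : H)
    (hexact : ∀ w ∈ Yh, ⟪c φ, c w⟫ = ⟪f, w⟫)
    (uh φh : H) (hmem : inVh c Xh Yh uh φh)
    (hdisc : ∀ v ψ : H, inVh c Xh Yh v ψ → ⟪φh, ψ⟫ = ⟪f, v⟫) :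
    ∀ vh ψh : H, inVh c Xh Yh vh ψh → ∀ μh ∈ Xh,
      ⟪c (uh - vh), c (φ - μh)⟫ - ⟪φh - ψh, φ - μh⟫ = -⟪φ - φh, φh - ψh⟫ :=
  stmt7_general c Xh Yh φ f hexact uh φh hmem hdisc
end

section
/- Let H be a real inner product space, c : H → H a linear map, X_h a finite-dimensional subspace of H, Y_h ⊆ X_h a subspace, and C > 0 a constant with ‖v‖ ≤ C‖c v‖ for all v ∈ Y_h. Let 𝒱_h = {(v, ψ) ∈ Y_h × X_h : ⟨c v, c μ⟩ = ⟨ψ, μ⟩ for all μ ∈ X_h}. Suppose u, φ, f ∈ H satisfy ⟨c φ, c w⟩ = ⟨f, w⟩ for all w ∈ Y_h, and (u_h, φ_h) ∈ 𝒱_h satisfies ⟨φ_h, ψ⟩ = ⟨f, v⟩ for all (v, ψ) ∈ 𝒱_h. Then there exists a constant K > 0, depending only on C, such that for every (v_h, ψ_h) ∈ 𝒱_h and every μ_h ∈ X_h, ‖c(u − u_h)‖ + ‖φ − φ_h‖ ≤ K(‖c(u − v_h)‖ + ‖φ − ψ_h‖ + ‖φ − μ_h‖ + ‖c(φ − μ_h)‖).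 -/
/-!
Strang-type argument. For any `(v_h, ψ_h) ∈ 𝒱_h` the discrete error `(e, d) = (v_h − u_h, ψ_h − φ_h)`
again lies in `𝒱_h`, so testing the constraint with `μ = e` and using the discrete Friedrichs
inequality gives `‖c e‖ ≤ C ‖d‖`. Testing the two variational equations with `(e, d)` gives the
consistency identity `⟪φ − φ_h, d⟫ = ⟪φ − μ_h, d⟫ − ⟪c (φ − μ_h), c e⟫` for every `μ_h ∈ X_h`,
which bounds `‖d‖` by the approximation errors; the triangle inequality finishes the proof.
-/

open scoped RealInnerProductSpace

namespace inVh

variable {H : Type*} [NormedAddCommGroup H] [InnerProductSpace ℝ H]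
  {c : H →ₗ[ℝ] H} {Xh Yh : Submodule ℝ H}

theorem sub_s9 {v ψ v' ψ' : H} (h : inVh c Xh Yh v ψ) (h' : inVh c Xh Yh v' ψ') :
    inVh c Xh Yh (v - v') (ψ - ψ') := by
  obtain ⟨hv, hψ, hcon⟩ := h
  obtain ⟨hv', hψ', hcon'⟩ := h'
  refine ⟨Yh.sub_mem hv hv', Xh.sub_mem hψ hψ', fun μ hμ => ?_⟩
  rw [map_sub, inner_sub_left, inner_sub_left, hcon μ hμ, hcon' μ hμ]

theorem norm_map_le (hYX : Yh ≤ Xh) {C : ℝ} (hC : 0 ≤ C)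
    (hFried : ∀ v ∈ Yh, ‖v‖ ≤ C * ‖c v‖) {v ψ : H} (h : inVh c Xh Yh v ψ) :
    ‖c v‖ ≤ C * ‖ψ‖ := by
  obtain ⟨hv, -, hcon⟩ := h
  have hsq : ‖c v‖ ^ 2 ≤ C * ‖ψ‖ * ‖c v‖ :=
    calc ‖c v‖ ^ 2 = ⟪ψ, v⟫ := by rw [← hcon v (hYX hv), real_inner_self_eq_norm_sq]
      _ ≤ ‖ψ‖ * ‖v‖ := real_inner_le_norm ψ v
      _ ≤ ‖ψ‖ * (C * ‖c v‖) := mul_le_mul_of_nonneg_left (hFried v hv) (norm_nonneg ψ)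
      _ = C * ‖ψ‖ * ‖c v‖ := by ring
  rcases (norm_nonneg (c v)).eq_or_lt with h0 | h0
  · rw [← h0]
    positivity
  · nlinarith

theorem inner_sub_eq {φ φh f : H} (hexact : ∀ w ∈ Yh, ⟪c φ, c w⟫ = ⟪f, w⟫)
    (hdisc : ∀ v ψ : H, inVh c Xh Yh v ψ → ⟪φh, ψ⟫ = ⟪f, v⟫)
    {e d : H} (h : inVh c Xh Yh e d) {μ : H} (hμ : μ ∈ Xh) :
    ⟪φ - φh, d⟫ = ⟪φ - μ, d⟫ - ⟪c (φ - μ), c e⟫ := by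
  have horth : ⟪φh, d⟫ = ⟪c φ, c e⟫ := by rw [hdisc e d h, hexact e h.1]
  have hμe : ⟪c μ, c e⟫ = ⟪μ, d⟫ := by rw [real_inner_comm, h.2.2 μ hμ, real_inner_comm]
  rw [map_sub, inner_sub_left, inner_sub_left, inner_sub_left, horth, hμe]
  ring

end inVh

theorem norm_sub_le_of_inVh {H : Type*} [NormedAddCommGroup H] [InnerProductSpace ℝ H]
    {c : H →ₗ[ℝ] H} {Xh Yh : Submodule ℝ H} (hYX : Yh ≤ Xh) {C : ℝ} (hC : 0 ≤ C)
    (hFried : ∀ v ∈ Yh, ‖v‖ ≤ C * ‖c v‖) {φ f uh φh : H}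
    (hexact : ∀ w ∈ Yh, ⟪c φ, c w⟫ = ⟪f, w⟫) (hmem : inVh c Xh Yh uh φh)
    (hdisc : ∀ v ψ : H, inVh c Xh Yh v ψ → ⟪φh, ψ⟫ = ⟪f, v⟫)
    {vh ψh : H} (hv : inVh c Xh Yh vh ψh) {μh : H} (hμ : μh ∈ Xh) :
    ‖ψh - φh‖ ≤ ‖φ - ψh‖ + ‖φ - μh‖ + C * ‖c (φ - μh)‖ := by
  set e := vh - uh
  set d := ψh - φh
  have hed : inVh c Xh Yh e d := hv.sub_s9 hmem
  have hce : ‖c e‖ ≤ C * ‖d‖ := hed.norm_map_le hYX hC hFried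
  have hsq : ‖d‖ ^ 2 ≤ (‖φ - ψh‖ + ‖φ - μh‖ + C * ‖c (φ - μh)‖) * ‖d‖ :=
    calc ‖d‖ ^ 2 = ⟪φ - μh, d⟫ - ⟪c (φ - μh), c e⟫ - ⟪φ - ψh, d⟫ := by
          rw [← inVh.inner_sub_eq hexact hdisc hed hμ, ← inner_sub_left,
            sub_sub_sub_cancel_left, real_inner_self_eq_norm_sq]
      _ ≤ ‖φ - μh‖ * ‖d‖ + ‖c (φ - μh)‖ * ‖c e‖ + ‖φ - ψh‖ * ‖d‖ := by
          have h₁ := real_inner_le_norm (φ - μh) d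
          have h₂ := abs_real_inner_le_norm (c (φ - μh)) (c e)
          have h₃ := abs_real_inner_le_norm (φ - ψh) d
          linarith [neg_abs_le ⟪c (φ - μh), c e⟫, neg_abs_le ⟪φ - ψh, d⟫]
      _ ≤ (‖φ - ψh‖ + ‖φ - μh‖ + C * ‖c (φ - μh)‖) * ‖d‖ := by
          nlinarith [mul_le_mul_of_nonneg_left hce (norm_nonneg (c (φ - μh)))]
  rcases (norm_nonneg d).eq_or_lt with h0 | h0
  · rw [← h0]
    positivity
  · nlinarith

theorem stmt9_general {H : Type*} [NormedAddCommGroup H] [InnerProductSpace ℝ H]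
    (c : H →ₗ[ℝ] H) (Xh Yh : Submodule ℝ H)
    (hYX : Yh ≤ Xh) (C : ℝ) (hC : 0 < C)
    (hFried : ∀ v ∈ Yh, ‖v‖ ≤ C * ‖c v‖)
    (u φ f : H)
    (hexact : ∀ w ∈ Yh, ⟪c φ, c w⟫ = ⟪f, w⟫)
    (uh φh : H) (hmem : inVh c Xh Yh uh φh)
    (hdisc : ∀ v ψ : H, inVh c Xh Yh v ψ → ⟪φh, ψ⟫ = ⟪f, v⟫) :
    ∃ K : ℝ, 0 < K ∧ ∀ vh ψh : H, inVh c Xh Yh vh ψh → ∀ μh ∈ Xh,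
      ‖c (u - uh)‖ + ‖φ - φh‖ ≤
        K * (‖c (u - vh)‖ + ‖φ - ψh‖ + ‖φ - μh‖ + ‖c (φ - μh)‖) := by
  refine ⟨2 + 2 * C + C ^ 2, by positivity, fun vh ψh hv μh hμ => ?_⟩
  have hd := norm_sub_le_of_inVh hYX hC.le hFried hexact hmem hdisc hv hμ
  have hce : ‖c vh - c uh‖ ≤ C * ‖ψh - φh‖ := by
    simpa only [map_sub] using (hv.sub_s9 hmem).norm_map_le hYX hC.le hFried
  have hu : ‖c (u - uh)‖ ≤ ‖c (u - vh)‖ + ‖c vh - c uh‖ := by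
    simpa only [map_sub] using norm_sub_le_norm_sub_add_norm_sub (c u) (c vh) (c uh)
  have hφ := norm_sub_le_norm_sub_add_norm_sub φ ψh φh
  have := norm_nonneg (c (u - vh))
  have := norm_nonneg (φ - ψh)
  have := norm_nonneg (φ - μh)
  have := norm_nonneg (c (φ - μh))
  nlinarith [mul_le_mul_of_nonneg_left hd hC.le]

/-- Quasi-optimal error estimate for the mixed method for the quad-curl problem:
the error `‖c(u − u_h)‖ + ‖φ − φ_h‖` is bounded, up to a constant depending only on the
discrete Friedrichs constant `C`, by the best approximation errors from `𝒱_h` and `X_h`. -/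
theorem stmt9 {H : Type*} [NormedAddCommGroup H] [InnerProductSpace ℝ H]
    (c : H →ₗ[ℝ] H) (Xh Yh : Submodule ℝ H) [FiniteDimensional ℝ Xh]
    (hYX : Yh ≤ Xh) (C : ℝ) (hC : 0 < C)
    (hFried : ∀ v ∈ Yh, ‖v‖ ≤ C * ‖c v‖)
    (u φ f : H)
    (hexact : ∀ w ∈ Yh, ⟪c φ, c w⟫ = ⟪f, w⟫)
    (uh φh : H) (hmem : inVh c Xh Yh uh φh)
    (hdisc : ∀ v ψ : H, inVh c Xh Yh v ψ → ⟪φh, ψ⟫ = ⟪f, v⟫) :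
    ∃ K : ℝ, 0 < K ∧ ∀ vh ψh : H, inVh c Xh Yh vh ψh → ∀ μh ∈ Xh,
      ‖c (u - uh)‖ + ‖φ - φh‖ ≤
        K * (‖c (u - vh)‖ + ‖φ - ψh‖ + ‖φ - μh‖ + ‖c (φ - μh)‖) :=
  stmt9_general c Xh Yh hYX C hC hFried u φ f hexact uh φh hmem hdisc
end

section
/- Let H be a real inner product space, c : H → H a linear map, X_h a finite-dimensional subspace of H, Y_h ⊆ X_h a subspace, and 𝒱_h = {(v, ψ) ∈ Y_h × X_h : ⟨c v, c μ⟩ = ⟨ψ, μ⟩ for all μ ∈ X_h}. Suppose u, φ ∈ H satisfy ⟨φ, w⟩ = ⟨c u, c w⟩ for all w ∈ X_h, and suppose α > 0 satisfies the inverse inequality ‖c w‖ ≤ α‖w‖ for all w ∈ X_h. Then for every (v_h, ψ_h) ∈ 𝒱_h and every μ_h ∈ X_h, ‖φ − ψ_h‖ ≤ 2‖φ − μ_h‖ + α‖c(u − v_h)‖. -/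
open scoped RealInnerProductSpace

/-!
With `e = μ_h − ψ_h ∈ X_h`, the Galerkin relations give `⟪φ − ψ_h, e⟫ = ⟪c (u − v_h), c e⟫`,
which the inverse inequality bounds by `α ‖c (u − v_h)‖ ‖e‖`. Testing
`‖e‖² = ⟪μ_h − φ, e⟫ + ⟪φ − ψ_h, e⟫` then yields `‖e‖ ≤ ‖φ − μ_h‖ + α ‖c (u − v_h)‖`, and the
triangle inequality `‖φ − ψ_h‖ ≤ ‖φ − μ_h‖ + ‖e‖` concludes.
-/

section InnerProductSpace

variable {E : Type*} [NormedAddCommGroup E] [InnerProductSpace ℝ E]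

theorem norm_le_of_inner_self_le_mul_norm {x : E} {A : ℝ} (hA : 0 ≤ A)
    (h : ⟪x, x⟫ ≤ A * ‖x‖) : ‖x‖ ≤ A := by
  rw [real_inner_self_eq_norm_mul_norm] at h
  rcases (norm_nonneg x).eq_or_lt with hx | hx
  · rwa [← hx]
  · exact le_of_mul_le_mul_right h hx

theorem norm_sub_le_two_mul_add_of_inner_sub_le {K : Submodule ℝ E} {x y : E} {δ : ℝ}
    (hδ : 0 ≤ δ) (hy : y ∈ K) (hres : ∀ w ∈ K, ⟪x - y, w⟫ ≤ δ * ‖w‖) {z : E} (hz : z ∈ K) :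
    ‖x - y‖ ≤ 2 * ‖x - z‖ + δ := by
  set e := z - y
  have he : ‖e‖ ≤ ‖x - z‖ + δ := by
    refine norm_le_of_inner_self_le_mul_norm (by positivity) ?_
    calc ⟪e, e⟫ = ⟪z - x, e⟫ + ⟪x - y, e⟫ := by rw [← inner_add_left, sub_add_sub_cancel]
      _ ≤ ‖z - x‖ * ‖e‖ + δ * ‖e‖ :=
          add_le_add (real_inner_le_norm _ _) (hres e (K.sub_mem hz hy))
      _ = (‖x - z‖ + δ) * ‖e‖ := by rw [norm_sub_rev]; ring
  calc ‖x - y‖ ≤ ‖x - z‖ + ‖e‖ := norm_sub_le_norm_sub_add_norm_sub x z y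
    _ ≤ 2 * ‖x - z‖ + δ := by linarith

end InnerProductSpace

theorem inVh.inner_sub_eq_s10 {H : Type*} [NormedAddCommGroup H] [InnerProductSpace ℝ H]
    {c : H →ₗ[ℝ] H} {Xh Yh : Submodule ℝ H} {u φ v ψ : H}
    (hrel : ∀ w ∈ Xh, ⟪φ, w⟫ = ⟪c u, c w⟫) (hvψ : inVh c Xh Yh v ψ) {w : H} (hw : w ∈ Xh) :
    ⟪φ - ψ, w⟫ = ⟪c (u - v), c w⟫ := by
  rw [inner_sub_left, hrel w hw, ← hvψ.2.2 w hw, map_sub, inner_sub_left]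

theorem stmt10_general {H : Type*} [NormedAddCommGroup H] [InnerProductSpace ℝ H]
    (c : H →ₗ[ℝ] H) (Xh Yh : Submodule ℝ H)
    (u φ : H)
    (hrel : ∀ w ∈ Xh, ⟪φ, w⟫ = ⟪c u, c w⟫)
    (α : ℝ) (hα : 0 < α)
    (hinv : ∀ w ∈ Xh, ‖c w‖ ≤ α * ‖w‖) :
    ∀ vh ψh : H, inVh c Xh Yh vh ψh → ∀ μh ∈ Xh,
      ‖φ - ψh‖ ≤ 2 * ‖φ - μh‖ + α * ‖c (u - vh)‖ := by
  intro vh ψh hV μh hμ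
  have hres : ∀ w ∈ Xh, ⟪φ - ψh, w⟫ ≤ α * ‖c (u - vh)‖ * ‖w‖ := fun w hw =>
    calc ⟪φ - ψh, w⟫ = ⟪c (u - vh), c w⟫ := hV.inner_sub_eq_s10 hrel hw
      _ ≤ ‖c (u - vh)‖ * ‖c w‖ := real_inner_le_norm _ _
      _ ≤ ‖c (u - vh)‖ * (α * ‖w‖) := by gcongr; exact hinv w hw
      _ = α * ‖c (u - vh)‖ * ‖w‖ := by ring
  exact norm_sub_le_two_mul_add_of_inner_sub_le (by positivity) hV.2.1 hres hμ

/-- Key intermediate inequality in the second error estimate for the mixed method,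
using the inverse inequality `‖c w‖ ≤ α‖w‖` on `X_h`:
`‖φ − ψ_h‖ ≤ 2‖φ − μ_h‖ + α‖c(u − v_h)‖`. -/
theorem stmt10 {H : Type*} [NormedAddCommGroup H] [InnerProductSpace ℝ H]
    (c : H →ₗ[ℝ] H) (Xh Yh : Submodule ℝ H) [FiniteDimensional ℝ Xh]
    (hYX : Yh ≤ Xh)
    (u φ : H)
    (hrel : ∀ w ∈ Xh, ⟪φ, w⟫ = ⟪c u, c w⟫)
    (α : ℝ) (hα : 0 < α)
    (hinv : ∀ w ∈ Xh, ‖c w‖ ≤ α * ‖w‖) :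
    ∀ vh ψh : H, inVh c Xh Yh vh ψh → ∀ μh ∈ Xh,
      ‖φ - ψh‖ ≤ 2 * ‖φ - μh‖ + α * ‖c (u - vh)‖ :=
  stmt10_general c Xh Yh u φ hrel α hα hinv
end

section
/- Let H be a real inner product space, A : H → H a linear map, W ⊆ H a subspace, and V, G ⊆ W subspaces such that: every w ∈ W can be written as w = v + g with v ∈ V and g ∈ G; ⟨v, g⟩ = 0 for all v ∈ V and g ∈ G; A g = 0 for all g ∈ G; and there is C > 0 with ‖v‖ ≤ C‖A v‖ for all v ∈ V. Then: (i) if λ ∈ ℝ with λ ≠ 0 and u ∈ W satisfy ⟨A u, A q⟩ = λ⟨u, q⟩ for all q ∈ W, then u ∈ V; (ii) if u ∈ V and λ ∈ ℝ satisfy ⟨A u, A q⟩ = λ⟨u, q⟩ for all q ∈ V, then this identity holds for all q ∈ W; (iii) u ∈ W satisfies ⟨A u, A q⟩ = 0 for all q ∈ W if and only if u ∈ G. -/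
open scoped RealInnerProductSpace

/-
Proof idea: split every test function along `W = V ⊕ G`. Since `A` kills `G` and `V ⟂ G`,
testing the eigenvalue identity against the `G`-component `g` of `u` gives `0 = λ ‖g‖²`,
which forces `g = 0` when `λ ≠ 0`; testing against the `V`-component of `u` gives `A v = 0`,
and then the Friedrichs inequality forces `v = 0`.
-/

section KernelSplitting

variable {H : Type*} [NormedAddCommGroup H] [InnerProductSpace ℝ H] {A : H →ₗ[ℝ] H}

lemma map_add_of_map_eq_zero (v : H) {g : H} (hg : A g = 0) : A (v + g) = A v := by
  rw [map_add, hg, add_zero]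

lemma eq_zero_of_eigen_of_inner_eq_zero {lam : ℝ} (hlam : lam ≠ 0) {v g : H}
    (hvg : ⟪v, g⟫ = 0) (hg : A g = 0) (heig : ⟪A (v + g), A g⟫ = lam * ⟪v + g, g⟫) :
    g = 0 := by
  rw [hg, inner_zero_right, inner_add_left, hvg, zero_add] at heig
  exact inner_self_eq_zero.mp ((mul_eq_zero.mp heig.symm).resolve_left hlam)

lemma inner_map_add_eq_of_inner_eq_zero {lam : ℝ} {u v g : H} (hug : ⟪u, g⟫ = 0)
    (hg : A g = 0) (heig : ⟪A u, A v⟫ = lam * ⟪u, v⟫) :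
    ⟪A u, A (v + g)⟫ = lam * ⟪u, v + g⟫ := by
  rw [map_add_of_map_eq_zero v hg, heig, inner_add_right, hug, add_zero]

lemma eq_zero_of_inner_map_add_eq_zero {C : ℝ} {v g : H} (hv : ‖v‖ ≤ C * ‖A v‖)
    (hg : A g = 0) (h : ⟪A (v + g), A v⟫ = 0) : v = 0 := by
  rw [map_add_of_map_eq_zero v hg, inner_self_eq_zero] at h
  rw [h, norm_zero, mul_zero] at hv
  exact norm_le_zero_iff.mp hv

end KernelSplitting

theorem stmt15_general {H : Type*} [NormedAddCommGroup H] [InnerProductSpace ℝ H]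
    (A : H →ₗ[ℝ] H) (W V G : Submodule ℝ H) (hVW : V ≤ W) (hGW : G ≤ W)
    (hdecomp : ∀ w ∈ W, ∃ v ∈ V, ∃ g ∈ G, w = v + g)
    (horth : ∀ v ∈ V, ∀ g ∈ G, ⟪v, g⟫ = 0)
    (hAG : ∀ g ∈ G, A g = 0)
    (C : ℝ) (hFried : ∀ v ∈ V, ‖v‖ ≤ C * ‖A v‖) :
    ((∀ lam : ℝ, lam ≠ 0 → ∀ u ∈ W,
        (∀ q ∈ W, ⟪A u, A q⟫ = lam * ⟪u, q⟫) → u ∈ V) ∧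
     (∀ lam : ℝ, ∀ u ∈ V,
        (∀ q ∈ V, ⟪A u, A q⟫ = lam * ⟪u, q⟫) →
        ∀ q ∈ W, ⟪A u, A q⟫ = lam * ⟪u, q⟫) ∧
     (∀ u ∈ W, (∀ q ∈ W, ⟪A u, A q⟫ = 0) ↔ u ∈ G)) := by
  refine ⟨fun lam hlam u hu heig => ?_, fun lam u hu heig q hq => ?_,
    fun u hu => ⟨fun hker => ?_, fun hu q _ => ?_⟩⟩
  · obtain ⟨v, hv, g, hg, rfl⟩ := hdecomp u hu
    have hg0 := eq_zero_of_eigen_of_inner_eq_zero hlam (horth v hv g hg) (hAG g hg)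
      (heig g (hGW hg))
    rwa [hg0, add_zero]
  · obtain ⟨v, hv, g, hg, rfl⟩ := hdecomp q hq
    exact inner_map_add_eq_of_inner_eq_zero (horth u hu g hg) (hAG g hg) (heig v hv)
  · obtain ⟨v, hv, g, hg, rfl⟩ := hdecomp u hu
    have hv0 := eq_zero_of_inner_map_add_eq_zero (hFried v hv) (hAG g hg) (hker v (hVW hv))
    rwa [hv0, zero_add]
  · rw [hAG u hu, inner_zero_left]

/-- The quad-curl eigenvalues coincide with the nonzero eigenvalues of the eigenvalue
problem posed on all of `W = V ⊕ G` (Helmholtz decomposition): (i) eigenfunctions for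
nonzero eigenvalues lie in `V`; (ii) the eigenvalue identity on `V` extends to `W`;
(iii) `⟪A u, A q⟫ = 0` for all `q ∈ W` iff `u ∈ G`. -/
theorem stmt15 {H : Type*} [NormedAddCommGroup H] [InnerProductSpace ℝ H]
    (A : H →ₗ[ℝ] H) (W V G : Submodule ℝ H) (hVW : V ≤ W) (hGW : G ≤ W)
    (hdecomp : ∀ w ∈ W, ∃ v ∈ V, ∃ g ∈ G, w = v + g)
    (horth : ∀ v ∈ V, ∀ g ∈ G, ⟪v, g⟫ = 0)
    (hAG : ∀ g ∈ G, A g = 0)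
    (C : ℝ) (hC : 0 < C) (hFried : ∀ v ∈ V, ‖v‖ ≤ C * ‖A v‖) :
    ((∀ lam : ℝ, lam ≠ 0 → ∀ u ∈ W,
        (∀ q ∈ W, ⟪A u, A q⟫ = lam * ⟪u, q⟫) → u ∈ V) ∧
     (∀ lam : ℝ, ∀ u ∈ V,
        (∀ q ∈ V, ⟪A u, A q⟫ = lam * ⟪u, q⟫) →
        ∀ q ∈ W, ⟪A u, A q⟫ = lam * ⟪u, q⟫) ∧
     (∀ u ∈ W, (∀ q ∈ W, ⟪A u, A q⟫ = 0) ↔ u ∈ G)) :=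
  stmt15_general A W V G hVW hGW hdecomp horth hAG C hFried
end

section
/- Let H be a real inner product space, c : H → H a linear map, U_{0,h} ⊆ U_h ⊆ H subspaces, S_h a real vector space, and g : S_h → H a linear map with g(S_h) ⊆ U_{0,h} and c(g ξ) = 0 for all ξ ∈ S_h. Suppose λ_h ∈ ℝ with λ_h ≠ 0, and (u_h, w_h) ∈ U_{0,h} × U_h satisfy ⟨w_h, v⟩ = ⟨c v, c u_h⟩ for all v ∈ U_h and ⟨c w_h, c q⟩ = λ_h⟨u_h, q⟩ for all q ∈ U_{0,h}. Then ⟨u_h, g ξ⟩ = 0 for all ξ ∈ S_h. -/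
open scoped RealInnerProductSpace

theorem stmt16_general {H S : Type*} [NormedAddCommGroup H] [InnerProductSpace ℝ H]
    [AddCommGroup S] [Module ℝ S]
    (c : H →ₗ[ℝ] H) (U0h : Submodule ℝ H)
    (g : S →ₗ[ℝ] H) (hgU : ∀ ξ : S, g ξ ∈ U0h) (hcg : ∀ ξ : S, c (g ξ) = 0)
    (lamh : ℝ) (hlam : lamh ≠ 0) (uh wh : H)
    (h2 : ∀ q ∈ U0h, ⟪c wh, c q⟫ = lamh * ⟪uh, q⟫) :
    ∀ ξ : S, ⟪uh, g ξ⟫ = 0 := by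
  intro ξ
  have h : lamh * ⟪uh, g ξ⟫ = 0 := by
    rw [← h2 (g ξ) (hgU ξ), hcg ξ, inner_zero_right]
  exact (mul_eq_zero_iff_left hlam).mp h

/-- Bypassing the divergence-free constraint in the discrete mixed quad-curl eigenvalue
problem: any discrete eigenfunction `u_h` associated with a nonzero eigenvalue `λ_h` is
automatically discretely divergence-free, i.e. `⟪u_h, g ξ⟫ = 0` for all `ξ ∈ S_h`. -/
theorem stmt16 {H S : Type*} [NormedAddCommGroup H] [InnerProductSpace ℝ H]
    [AddCommGroup S] [Module ℝ S]
    (c : H →ₗ[ℝ] H) (U0h Uh : Submodule ℝ H) (hU : U0h ≤ Uh)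
    (g : S →ₗ[ℝ] H) (hgU : ∀ ξ : S, g ξ ∈ U0h) (hcg : ∀ ξ : S, c (g ξ) = 0)
    (lamh : ℝ) (hlam : lamh ≠ 0) (uh wh : H) (huh : uh ∈ U0h) (hwh : wh ∈ Uh)
    (h1 : ∀ v ∈ Uh, ⟪wh, v⟫ = ⟪c v, c uh⟫)
    (h2 : ∀ q ∈ U0h, ⟪c wh, c q⟫ = lamh * ⟪uh, q⟫) :
    ∀ ξ : S, ⟪uh, g ξ⟫ = 0 :=
  stmt16_general c U0h g hgU hcg lamh hlam uh wh h2
end
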